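/- Let e₁,…,e_m be vectors in a Hilbert 𝔄-module 𝔛 with ⟨eᵢ,eⱼ⟩ = 0 for i ≠ j and ‖eₖ‖ = 1. Let r_k, ρ_k ∈ ℝ and suppose x₁,…,xₙ ∈ 𝔛 satisfy r_k²‖xⱼ‖ ≥ 0, r_k²‖xⱼ‖·1 ≤ Re⟨r_k e_k, xⱼ⟩ and ρ_k²‖xⱼ‖·1 ≤ Im⟨ρ_k e_k, xⱼ⟩ in the order of 𝔄, for all j, k. Then (∑ₖ (r_k² + ρ_k²))^{1/2} · ∑ⱼ ‖xⱼ‖ ≤ ‖∑ⱼ xⱼ‖. -/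

import Mathlib

open scoped RightActions

/-- Hermitian real part of an element of a complex *-algebra. -/
noncomputable def cre {A : Type*} [Ring A] [StarRing A] [Module ℂ A] (a : A) : A :=
  (2 : ℂ)⁻¹ • (a + star a)

/-- Hermitian imaginary part of an element of a complex *-algebra. -/
noncomputable def cim {A : Type*} [Ring A] [StarRing A] [Module ℂ A] (a : A) : A :=
  (2 * Complex.I)⁻¹ • (a - star a)

/-- The Hilbert C⋆-module class as it stood in Mathlib (Dec 2024): a right `A`-module. -/
class CStarModuleOld (A E : Type*) [NonUnitalSemiring A] [StarRing A]
    [Module ℂ A] [AddCommGroup E] [Module ℂ E] [PartialOrder A] [SMul Aᵐᵒᵖ E] [Norm A] [Norm E]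
    extends Inner A E where
  inner_add_right {x} {y} {z} : inner x (y + z) = inner x y + inner x z
  inner_self_nonneg {x} : 0 ≤ inner x x
  inner_self {x} : inner x x = 0 ↔ x = 0
  inner_op_smul_right {a : A} {x y : E} : inner x (y <• a) = inner x y * a
  inner_smul_right_complex {z : ℂ} {x} {y} : inner x (z • y) = z • inner x y
  star_inner x y : star (inner x y) = inner y x
  norm_eq_sqrt_norm_inner_self x : ‖x‖ = Real.sqrt ‖inner x x‖

/-!
Put `c_k = r_k + i ρ_k` and `v = ∑ₖ c_k e_k`. Since `Re ⟨c e, x⟩ = Re ⟨r e, x⟩ + Im ⟨ρ e, x⟩`, the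
hypotheses add up to `(∑ₖ (r_k² + ρ_k²)) (∑ⱼ ‖x_j‖) · 1 ≤ Re ⟨v, ∑ⱼ x_j⟩`. Taking norms and using
the Cauchy–Schwarz inequality `‖⟨v, w⟩‖ ≤ ‖v‖ ‖w‖` of Hilbert C⋆-modules bounds the left side by
`‖v‖ ‖∑ⱼ x_j‖`, while orthogonality of the `e_k` gives `‖v‖² ≤ ∑ₖ |c_k|² = ∑ₖ (r_k² + ρ_k²)`.
-/

open ComplexStarModule

section RealImaginaryPart

variable {A : Type*} [Ring A] [StarRing A] [Module ℂ A] [StarModule ℂ A]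

lemma cre_eq_realPart (a : A) : cre a = ℜ a := by
  rw [cre, realPart_apply_coe, ← Complex.coe_smul]
  norm_num

lemma cim_eq_imaginaryPart (a : A) : cim a = ℑ a := by
  rw [cim, imaginaryPart_apply_coe, ← Complex.coe_smul, smul_smul]
  congr 1
  field_simp
  simp [Complex.I_sq]

lemma cre_sum {ι : Type*} (s : Finset ι) (f : ι → A) :
    cre (∑ i ∈ s, f i) = ∑ i ∈ s, cre (f i) := by
  simp [cre_eq_realPart]

lemma cre_star_smul (z : ℂ) (a : A) :
    cre (star z • a) = cre ((z.re : ℂ) • a) + cim ((z.im : ℂ) • a) := by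
  simp [cre_eq_realPart, cim_eq_imaginaryPart, realPart_smul, sub_eq_add_neg]

end RealImaginaryPart

lemma norm_cre_le {A : Type*} [CStarAlgebra A] (a : A) : ‖cre a‖ ≤ ‖a‖ := by
  rw [cre_eq_realPart]
  exact realPart.norm_le a

namespace CStarModuleOld

section Algebraic

variable {A E : Type*} [NonUnitalRing A] [StarRing A] [Module ℂ A]
  [PartialOrder A] [Norm A] [AddCommGroup E] [Module ℂ E] [SMul Aᵐᵒᵖ E] [Norm E]
  [CStarModuleOld A E]

local notation "⟪" x ", " y "⟫" => inner A x y

lemma inner_add_left {x y z : E} : ⟪x + y, z⟫ = ⟪x, z⟫ + ⟪y, z⟫ := by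
  rw [← star_inner (A := A) z, inner_add_right, star_add, star_inner, star_inner]

lemma inner_op_smul_left {a : A} {x y : E} : ⟪x <• a, y⟫ = star a * ⟪x, y⟫ := by
  rw [← star_inner (A := A) y, inner_op_smul_right, star_mul, star_inner]

lemma inner_smul_right_real {r : ℝ} {x y : E} : ⟪x, r • y⟫ = r • ⟪x, y⟫ := by
  rw [← Complex.coe_smul, inner_smul_right_complex, Complex.coe_smul]

variable [StarModule ℂ A]

lemma inner_smul_left_complex {z : ℂ} {x y : E} : ⟪z • x, y⟫ = star z • ⟪x, y⟫ := by
  rw [← star_inner (A := A) y, inner_smul_right_complex, star_smul, star_inner]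

lemma inner_smul_left_real {r : ℝ} {x y : E} : ⟪r • x, y⟫ = r • ⟪x, y⟫ := by
  rw [← Complex.coe_smul, inner_smul_left_complex, Complex.star_def, Complex.conj_ofReal,
    Complex.coe_smul]

variable (A) in
def innerₛₗ : E →ₗ⋆[ℂ] E →ₗ[ℂ] A where
  toFun x :=
    { toFun := fun y => ⟪x, y⟫
      map_add' := fun _ _ => inner_add_right
      map_smul' := fun _ _ => inner_smul_right_complex }
  map_add' _ _ := by ext; exact inner_add_left
  map_smul' _ _ := by ext; exact inner_smul_left_complex

lemma innerₛₗ_apply {x y : E} : innerₛₗ A x y = ⟪x, y⟫ := rfl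

lemma inner_zero_left {x : E} : ⟪0, x⟫ = 0 := by simp [← innerₛₗ_apply]

lemma inner_zero_right {x : E} : ⟪x, 0⟫ = 0 := by simp [← innerₛₗ_apply]

lemma inner_sub_left {x y z : E} : ⟪x - y, z⟫ = ⟪x, z⟫ - ⟪y, z⟫ := by simp [← innerₛₗ_apply]

lemma inner_sub_right {x y z : E} : ⟪x, y - z⟫ = ⟪x, y⟫ - ⟪x, z⟫ := by simp [← innerₛₗ_apply]

lemma inner_sum_left {ι : Type*} {s : Finset ι} {x : ι → E} {y : E} :
    ⟪∑ i ∈ s, x i, y⟫ = ∑ i ∈ s, ⟪x i, y⟫ :=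
  map_sum ((innerₛₗ A).flip y) ..

lemma inner_sum_right {ι : Type*} {s : Finset ι} {x : E} {y : ι → E} :
    ⟪x, ∑ i ∈ s, y i⟫ = ∑ i ∈ s, ⟪x, y i⟫ :=
  map_sum (innerₛₗ A x) ..

end Algebraic

protected lemma norm_nonneg (A : Type*) {E : Type*} [NonUnitalSemiring A] [StarRing A]
    [Module ℂ A] [AddCommGroup E] [Module ℂ E] [PartialOrder A] [SMul Aᵐᵒᵖ E] [Norm A] [Norm E]
    [CStarModuleOld A E] (x : E) : 0 ≤ ‖x‖ := by
  rw [norm_eq_sqrt_norm_inner_self (A := A) x]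
  exact Real.sqrt_nonneg _

section Norm

variable {A E : Type*} [NonUnitalCStarAlgebra A] [PartialOrder A] [AddCommGroup E] [Module ℂ E]
  [SMul Aᵐᵒᵖ E] [Norm E] [CStarModuleOld A E]

local notation "⟪" x ", " y "⟫" => inner A x y

variable (A) in
lemma norm_sq_eq (x : E) : ‖x‖ ^ 2 = ‖⟪x, x⟫‖ := by
  rw [norm_eq_sqrt_norm_inner_self (A := A) x, Real.sq_sqrt (norm_nonneg _)]

variable (A) in
lemma norm_eq_zero_of_subsingleton [Subsingleton A] (x : E) : ‖x‖ = 0 := by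
  rw [norm_eq_sqrt_norm_inner_self (A := A) x, Subsingleton.elim ⟪x, x⟫ 0, norm_zero,
    Real.sqrt_zero]

lemma norm_sum_smul_sq_le {ι : Type*} (s : Finset ι) (e : ι → E) (c : ι → ℂ)
    (horth : Pairwise fun i j => ⟪e i, e j⟫ = 0) :
    ‖∑ i ∈ s, c i • e i‖ ^ 2 ≤ ∑ i ∈ s, ‖c i‖ ^ 2 * ‖e i‖ ^ 2 := by
  have hdiag : ∀ i ∈ s, ⟪c i • e i, ∑ j ∈ s, c j • e j⟫ = (star (c i) * c i) • ⟪e i, e i⟫ := by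
    intro i hi
    rw [inner_sum_right, Finset.sum_eq_single_of_mem i hi]
    · rw [inner_smul_left_complex, inner_smul_right_complex, smul_smul]
    · intro j _ hji
      rw [inner_smul_left_complex, inner_smul_right_complex, horth hji.symm, smul_zero, smul_zero]
  rw [norm_sq_eq A, inner_sum_left, Finset.sum_congr rfl hdiag]
  refine (norm_sum_le _ _).trans (Finset.sum_le_sum fun i _ => le_of_eq ?_)
  rw [norm_smul, norm_mul, norm_star, ← norm_sq_eq A (e i), ← sq]

variable [StarOrderedRing A]

lemma inner_mul_inner_swap_le {x y : E} : ⟪y, x⟫ * ⟪x, y⟫ ≤ ‖x‖ ^ 2 • ⟪y, y⟫ := by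
  rcases (CStarModuleOld.norm_nonneg A x).eq_or_lt with hx | hx
  · have : x = 0 := by
      rw [← inner_self (A := A), ← norm_eq_zero, ← norm_sq_eq, ← hx, zero_pow two_ne_zero]
    rw [← hx]
    simp [this, inner_zero_left, inner_zero_right]
  generalize hxy : ⟪x, y⟫ = a
  have hyx : ⟪y, x⟫ = star a := by rw [← hxy, star_inner]
  have hP : star a * ⟪x, x⟫ * a ≤ ‖x‖ ^ 2 • (star a * a) := by
    rw [norm_sq_eq A]
    exact CStarAlgebra.star_left_conjugate_le_norm_smul (star_inner x x)
  have key : ‖x‖ ^ 2 • (star a * a) ≤ ‖x‖ ^ 2 • (‖x‖ ^ 2 • ⟪y, y⟫) := by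
    rw [← sub_nonneg]
    calc (0 : A) ≤ ⟪x <• a - ‖x‖ ^ 2 • y, x <• a - ‖x‖ ^ 2 • y⟫ := inner_self_nonneg
      _ = star a * ⟪x, x⟫ * a - ‖x‖ ^ 2 • (star a * a) - ‖x‖ ^ 2 • (star a * a)
          + ‖x‖ ^ 2 • (‖x‖ ^ 2 • ⟪y, y⟫) := by
        simp only [inner_sub_left, inner_sub_right, inner_op_smul_left, inner_op_smul_right,
          inner_smul_left_real, inner_smul_right_real, hxy, hyx, smul_mul_assoc, sub_mul, smul_sub]
        abel
      _ ≤ ‖x‖ ^ 2 • (star a * a) - ‖x‖ ^ 2 • (star a * a) - ‖x‖ ^ 2 • (star a * a)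
          + ‖x‖ ^ 2 • (‖x‖ ^ 2 • ⟪y, y⟫) := by gcongr
      _ = _ := by abel
  rw [hyx]
  exact (smul_le_smul_iff_of_pos_left (pow_pos hx 2)).mp key

variable (E) in
lemma norm_inner_le {x y : E} : ‖⟪x, y⟫‖ ≤ ‖x‖ * ‖y‖ := by
  have hsq : ‖⟪x, y⟫‖ ^ 2 ≤ (‖x‖ * ‖y‖) ^ 2 :=
    calc ‖⟪x, y⟫‖ ^ 2 = ‖star ⟪x, y⟫ * ⟪x, y⟫‖ := by rw [CStarRing.norm_star_mul_self, sq]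
      _ ≤ ‖‖x‖ ^ 2 • ⟪y, y⟫‖ := by
        refine CStarAlgebra.norm_le_norm_of_nonneg_of_le (star_mul_self_nonneg _) ?_
        rw [star_inner]
        exact inner_mul_inner_swap_le
      _ = (‖x‖ * ‖y‖) ^ 2 := by
        rw [norm_smul, Real.norm_of_nonneg (by positivity), ← norm_sq_eq A, mul_pow]
  have hxy : 0 ≤ ‖x‖ * ‖y‖ :=
    mul_nonneg (CStarModuleOld.norm_nonneg A x) (CStarModuleOld.norm_nonneg A y)
  exact (pow_le_pow_iff_left₀ (norm_nonneg _) hxy two_ne_zero).mp hsq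

end Norm

section Unital

variable {A E : Type*} [CStarAlgebra A] [PartialOrder A] [AddCommGroup E] [Module ℂ E]
  [SMul Aᵐᵒᵖ E] [Norm E] [CStarModuleOld A E]

local notation "⟪" x ", " y "⟫" => inner A x y

lemma cre_inner_smul_left (z : ℂ) (x y : E) :
    cre ⟪z • x, y⟫ = cre ⟪(z.re : ℂ) • x, y⟫ + cim ⟪(z.im : ℂ) • x, y⟫ := by
  rw [inner_smul_left_complex, cre_star_smul]
  simp only [inner_smul_left_complex, Complex.star_def, Complex.conj_ofReal]

variable [StarOrderedRing A]

lemma smul_one_le_cre_inner_sum {ι κ : Type*} [Fintype ι] [Fintype κ] (e : κ → E) (x : ι → E)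
    (r ρ : κ → ℝ)
    (h₁ : ∀ j k, (r k ^ 2 * ‖x j‖) • (1 : A) ≤ cre ⟪(r k : ℂ) • e k, x j⟫)
    (h₂ : ∀ j k, (ρ k ^ 2 * ‖x j‖) • (1 : A) ≤ cim ⟪(ρ k : ℂ) • e k, x j⟫) :
    ((∑ k, (r k ^ 2 + ρ k ^ 2)) * ∑ j, ‖x j‖) • (1 : A)
      ≤ cre ⟪∑ k, (⟨r k, ρ k⟩ : ℂ) • e k, ∑ j, x j⟫ := by
  rw [inner_sum_left, cre_sum, Finset.sum_mul, Finset.sum_smul]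
  refine Finset.sum_le_sum fun k _ => ?_
  rw [inner_sum_right, cre_sum, Finset.mul_sum, Finset.sum_smul]
  refine Finset.sum_le_sum fun j _ => ?_
  rw [cre_inner_smul_left, add_mul, add_smul]
  exact add_le_add (h₁ j k) (h₂ j k)

lemma le_norm_mul_norm_of_smul_one_le_cre_inner [Nontrivial A] {c : ℝ} {x y : E} (hc : 0 ≤ c)
    (h : c • (1 : A) ≤ cre ⟪x, y⟫) : c ≤ ‖x‖ * ‖y‖ :=
  calc c = ‖c • (1 : A)‖ := by rw [norm_smul, norm_one, mul_one, Real.norm_of_nonneg hc]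
    _ ≤ ‖cre ⟪x, y⟫‖ := CStarAlgebra.norm_le_norm_of_nonneg_of_le (smul_nonneg hc zero_le_one) h
    _ ≤ ‖⟪x, y⟫‖ := norm_cre_le _
    _ ≤ ‖x‖ * ‖y‖ := norm_inner_le E

end Unital

end CStarModuleOld

open CStarModuleOld

theorem stmt5_general {A E : Type*} [CStarAlgebra A] [PartialOrder A] [StarOrderedRing A]
    [AddCommGroup E] [Module ℂ E] [SMul Aᵐᵒᵖ E] [Norm E] [CStarModuleOld A E]
    (m n : ℕ) (e : Fin m → E) (x : Fin n → E)
    (horth : ∀ i j, i ≠ j → (inner A (e i) (e j) : A) = 0) (hnorm : ∀ k, ‖e k‖ = 1)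
    (r ρ : Fin m → ℝ)
    (h₁ : ∀ j k, (r k ^ 2 * ‖x j‖) • (1 : A) ≤ cre (inner A ((r k : ℂ) • e k) (x j) : A))
    (h₂ : ∀ j k, (ρ k ^ 2 * ‖x j‖) • (1 : A) ≤ cim (inner A ((ρ k : ℂ) • e k) (x j) : A)) :
    Real.sqrt (∑ k, (r k ^ 2 + ρ k ^ 2)) * ∑ j, ‖x j‖ ≤ ‖∑ j, x j‖ := by
  rcases subsingleton_or_nontrivial A with hA | hA
  · simp [norm_eq_zero_of_subsingleton A]
  set c := ∑ k, (r k ^ 2 + ρ k ^ 2)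
  have hc0 : 0 ≤ c := Finset.sum_nonneg fun k _ => by positivity
  set v := ∑ k, (⟨r k, ρ k⟩ : ℂ) • e k
  have hv : ‖v‖ ≤ √c := by
    refine Real.le_sqrt_of_sq_le ?_
    calc ‖v‖ ^ 2 ≤ ∑ k, ‖(⟨r k, ρ k⟩ : ℂ)‖ ^ 2 * ‖e k‖ ^ 2 := norm_sum_smul_sq_le _ _ _ horth
      _ = c := Finset.sum_congr rfl fun k _ => by
        rw [hnorm, Complex.sq_norm, Complex.normSq_mk]
        ring
  have hc : c * ∑ j, ‖x j‖ ≤ ‖v‖ * ‖∑ j, x j‖ :=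
    le_norm_mul_norm_of_smul_one_le_cre_inner
      (mul_nonneg hc0 (Finset.sum_nonneg fun j _ => CStarModuleOld.norm_nonneg A (x j)))
      (smul_one_le_cre_inner_sum e x r ρ h₁ h₂)
  rcases (Real.sqrt_nonneg c).eq_or_lt with h0 | h0
  · rw [← h0, zero_mul]
    exact CStarModuleOld.norm_nonneg A _
  refine le_of_mul_le_mul_left ?_ h0
  calc √c * (√c * ∑ j, ‖x j‖) = c * ∑ j, ‖x j‖ := by
        rw [← mul_assoc, Real.mul_self_sqrt hc0]
    _ ≤ ‖v‖ * ‖∑ j, x j‖ := hc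
    _ ≤ √c * ‖∑ j, x j‖ := mul_le_mul_of_nonneg_right hv (CStarModuleOld.norm_nonneg A _)

theorem stmt5 {A E : Type*} [CStarAlgebra A] [PartialOrder A] [StarOrderedRing A]
    [AddCommGroup E] [Module ℂ E] [SMul Aᵐᵒᵖ E] [Norm E] [CStarModuleOld A E]
    (m n : ℕ) (e : Fin m → E) (x : Fin n → E)
    (horth : ∀ i j, i ≠ j → (inner A (e i) (e j) : A) = 0) (hnorm : ∀ k, ‖e k‖ = 1)
    (r ρ : Fin m → ℝ)
    (hpos : ∀ j k, (0 : ℝ) ≤ r k ^ 2 * ‖x j‖)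
    (h₁ : ∀ j k, (r k ^ 2 * ‖x j‖) • (1 : A) ≤ cre (inner A ((r k : ℂ) • e k) (x j) : A))
    (h₂ : ∀ j k, (ρ k ^ 2 * ‖x j‖) • (1 : A) ≤ cim (inner A ((ρ k : ℂ) • e k) (x j) : A)) :
    Real.sqrt (∑ k, (r k ^ 2 + ρ k ^ 2)) * ∑ j, ‖x j‖ ≤ ‖∑ j, x j‖ :=
  stmt5_general m n e x horth hnorm r ρ h₁ h₂
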